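/- arXiv:1611.00848 — 8 statements merged into one kernel-verified Lean document; each statement's English description precedes it below -/
import Mathlib

section
/- If f, g : A → E are algebraic of degrees m and n, then the pointwise product fg is algebraic of degree at most m + n. -/
/-- The difference operator `(D_a f)(x) = f(x+a) − f(x)`. -/
def Dop {A E : Type*} [Add A] [Sub E] (a : A) (f : A → E) : A → E :=
  fun x => f (x + a) - f x

/-- `f` is algebraic of degree at most `n`: all `(n+1)`-fold iterated differences vanish. -/
def AlgBound {A E : Type*} [Add A] [Sub E] [Zero E] (f : A → E) (n : ℕ) : Prop :=
  ∀ l : List A, l.length = n + 1 → ∀ x, (l.foldr Dop f) x = 0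

/-- `f` is algebraic of degree exactly `n`. -/
def IsAlgDeg {A E : Type*} [Add A] [Sub E] [Zero E] (f : A → E) (n : ℕ) : Prop :=
  AlgBound f n ∧ ∀ m : ℕ, AlgBound f m → n ≤ m

/-! The product rule `D_a (f g) = (D_a f) · g(· + a) + f · D_a g` lowers the total degree by one,
so induction on `m + n` reduces the claim to products of constant functions. -/

section Difference

variable {A E : Type*}

lemma Dop_add [Add A] [AddCommGroup E] (a : A) (f g : A → E) :
    Dop a (f + g) = Dop a f + Dop a g := by
  funext x
  simp only [Dop, Pi.add_apply]
  abel

lemma Dop_zero [Add A] [AddGroup E] (a : A) : Dop a (0 : A → E) = 0 := by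
  funext x
  simp [Dop]

lemma Dop_comp_add_right [AddCommSemigroup A] [Sub E] (a b : A) (f : A → E) :
    Dop a (fun x => f (x + b)) = fun x => Dop a f (x + b) := by
  funext x
  simp only [Dop, add_right_comm]

lemma Dop_mul [Add A] [NonUnitalNonAssocRing E] (a : A) (f g : A → E) :
    Dop a (f * g) = Dop a f * (fun x => g (x + a)) + f * Dop a g := by
  funext x
  simp only [Dop, Pi.mul_apply, Pi.add_apply, sub_mul, mul_sub]
  abel

lemma List.foldr_Dop_add [Add A] [AddCommGroup E] (l : List A) (f g : A → E) :
    l.foldr Dop (f + g) = l.foldr Dop f + l.foldr Dop g := by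
  induction l with
  | nil => rfl
  | cons a l ih => simp only [List.foldr_cons, ih, Dop_add]

lemma List.foldr_Dop_zero [Add A] [AddGroup E] (l : List A) :
    l.foldr Dop (0 : A → E) = 0 := by
  induction l with
  | nil => rfl
  | cons a l ih => simp only [List.foldr_cons, ih, Dop_zero]

lemma List.foldr_Dop_comp_add_right [AddCommSemigroup A] [Sub E] (l : List A) (b : A)
    (f : A → E) : l.foldr Dop (fun x => f (x + b)) = fun x => l.foldr Dop f (x + b) := by
  induction l with
  | nil => rfl
  | cons a l ih => simp only [List.foldr_cons, ih, Dop_comp_add_right]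

end Difference

section AlgBound

variable {A E : Type*}

lemma algBound_zero_iff [Add A] [Sub E] [Zero E] {f : A → E} :
    AlgBound f 0 ↔ ∀ a, Dop a f = 0 := by
  simp only [AlgBound, zero_add, List.length_eq_one_iff, funext_iff]
  constructor
  · exact fun h a => h [a] ⟨a, rfl⟩
  · rintro h _ ⟨a, rfl⟩
    exact h a

lemma algBound_succ_iff [Add A] [Sub E] [Zero E] {f : A → E} {n : ℕ} :
    AlgBound f (n + 1) ↔ ∀ a, AlgBound (Dop a f) n := by
  have foldr_concat (l : List A) (a : A) : (l ++ [a]).foldr Dop f = l.foldr Dop (Dop a f) :=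
    List.foldr_append
  constructor
  · intro h a l hl
    rw [← foldr_concat]
    exact h _ (by simp [hl])
  · intro h l hl
    rcases l.eq_nil_or_concat with rfl | ⟨l, a, rfl⟩
    · simp at hl
    rw [List.concat_eq_append] at hl ⊢
    rw [foldr_concat]
    exact h a l (by simpa using hl)

lemma algBound_zero_fun [Add A] [AddGroup E] (n : ℕ) : AlgBound (0 : A → E) n := by
  intro l _ x
  rw [List.foldr_Dop_zero]
  rfl

lemma AlgBound.add [Add A] [AddCommGroup E] {f g : A → E} {n : ℕ} (hf : AlgBound f n)
    (hg : AlgBound g n) : AlgBound (f + g) n := by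
  intro l hl x
  rw [List.foldr_Dop_add, Pi.add_apply, hf l hl x, hg l hl x, add_zero]

lemma AlgBound.comp_add_right [AddCommSemigroup A] [Sub E] [Zero E] {f : A → E} {n : ℕ}
    (hf : AlgBound f n) (b : A) : AlgBound (fun x => f (x + b)) n := by
  intro l hl x
  rw [List.foldr_Dop_comp_add_right]
  exact hf l hl _

theorem AlgBound.mul [AddCommSemigroup A] [NonUnitalNonAssocRing E] {f g : A → E} {m n : ℕ}
    (hf : AlgBound f m) (hg : AlgBound g n) : AlgBound (f * g) (m + n) := by
  obtain ⟨k, hk⟩ : ∃ k, m + n = k := ⟨_, rfl⟩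
  induction k generalizing m n f g with
  | zero =>
    obtain ⟨rfl, rfl⟩ := Nat.add_eq_zero_iff.mp hk
    rw [algBound_zero_iff] at *
    intro a
    rw [Dop_mul, hf, hg, zero_mul, mul_zero, add_zero]
  | succ k ih =>
    rw [hk, algBound_succ_iff]
    intro a
    rw [Dop_mul]
    refine AlgBound.add ?_ ?_
    · cases m with
      | zero =>
        rw [algBound_zero_iff.mp hf a, zero_mul]
        exact algBound_zero_fun k
      | succ m =>
        obtain rfl : k = m + n := by omega
        exact ih (algBound_succ_iff.mp hf a) (hg.comp_add_right a) rfl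
    · cases n with
      | zero =>
        rw [algBound_zero_iff.mp hg a, mul_zero]
        exact algBound_zero_fun k
      | succ n =>
        obtain rfl : k = m + n := by omega
        exact ih hf (algBound_succ_iff.mp hg a) rfl

end AlgBound

/-- If `f, g : A → E` are algebraic of degrees `m` and `n`, then the pointwise product
`fg` is algebraic of degree at most `m + n`. -/
theorem stmt5 {A E : Type*} [CommSemiring A] [CommRing E] (f g : A → E) (m n : ℕ)
    (hf : IsAlgDeg f m) (hg : IsAlgDeg g n) :
    AlgBound (fun x => f x * g x) (m + n) :=
  hf.1.mul hg.1
end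

section
/- If f : A → E is algebraic of degree n and i : A → Ā is the canonical map from the semiring A to its Grothendieck ring Ā, then there is a unique map f̄ : Ā → E with f̄ ∘ i = f; moreover f̄ is algebraic of degree n, and if f is multiplicative then so is f̄. -/
open Finset fwdDiff fwdDiff_aux

section Ring

variable {A E : Type*} [AddCommMonoid A] [Ring E]

lemma commute_fwdDiffₗ (b c : A) : Commute (fwdDiffₗ A E b) (fwdDiffₗ A E c) := by
  ext f x
  simp only [Module.End.mul_apply, fwdDiffₗ_apply, fwdDiff, add_right_comm x b c]
  abel

lemma foldr_fwdDiff_eq_prod (l : List A) (f : A → E) :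
    l.foldr fwdDiff f = (l.map (fwdDiffₗ A E)).prod f := by
  induction l with
  | nil => rfl
  | cons c l ih =>
    rw [List.foldr_cons, ih, List.map_cons, List.prod_cons, Module.End.mul_apply]
    rfl

lemma foldr_fwdDiff_smul (l : List A) (e : E) (f : A → E) :
    l.foldr fwdDiff (e • f) = e • l.foldr fwdDiff f := by
  induction l with
  | nil => rfl
  | cons c l ih => simp [ih]

variable (A E) in
def algDegLT (m : ℕ) : Submodule E (A → E) where
  carrier := {f | ∀ l : List A, l.length = m → l.foldr fwdDiff f = 0}
  add_mem' {f g} hf hg l hl := by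
    rw [foldr_fwdDiff_eq_prod, map_add, ← foldr_fwdDiff_eq_prod, ← foldr_fwdDiff_eq_prod,
      hf l hl, hg l hl, add_zero]
  zero_mem' l _ := by rw [foldr_fwdDiff_eq_prod, map_zero]
  smul_mem' e f hf l hl := by rw [foldr_fwdDiff_smul, hf l hl, smul_zero]

variable {f : A → E} {m n : ℕ}

lemma mem_algDegLT :
    f ∈ algDegLT A E m ↔ ∀ l : List A, l.length = m → l.foldr fwdDiff f = 0 :=
  Iff.rfl

lemma algBound_iff_mem_algDegLT : AlgBound f n ↔ f ∈ algDegLT A E (n + 1) := by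
  simp only [AlgBound, mem_algDegLT, funext_iff]
  rfl

lemma mem_algDegLT_zero : f ∈ algDegLT A E 0 ↔ f = 0 :=
  ⟨fun hf => hf [] rfl, fun hf l hl => by rw [List.length_eq_zero_iff.mp hl, hf]; rfl⟩

lemma mem_algDegLT_succ_iff : f ∈ algDegLT A E (m + 1) ↔ ∀ c, fwdDiff c f ∈ algDegLT A E m := by
  refine ⟨fun hf c l hl => by simpa using hf (l ++ [c]) (by simp [hl]), fun h l hl => ?_⟩
  obtain ⟨l, c, rfl⟩ := (List.eq_nil_or_concat' l).resolve_left (by rintro rfl; simp at hl)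
  simpa using h c l (by simpa using hl)

lemma algDegLT_mono : Monotone (algDegLT A E) :=
  monotone_nat_of_le_succ fun m f hf l hl => by
    obtain ⟨c, l, rfl⟩ := List.exists_cons_of_length_eq_add_one hl
    rw [List.foldr_cons, hf l (by simpa using hl)]
    exact map_zero (fwdDiffₗ A E c)

lemma pow_fwdDiffₗ_apply_eq_zero {k : ℕ} (hf : f ∈ algDegLT A E m) (hk : m ≤ k) (b : A) :
    (fwdDiffₗ A E b ^ k) f = 0 := by
  simpa [foldr_fwdDiff_eq_prod] using algDegLT_mono hk hf (List.replicate k b) (by simp)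

lemma map_mem_algDegLT {T : Module.End ℤ (A → E)} (hT : ∀ c, Commute T (fwdDiffₗ A E c))
    (hf : f ∈ algDegLT A E m) : T f ∈ algDegLT A E m := fun l hl => by
  have hTl : Commute T (l.map (fwdDiffₗ A E)).prod :=
    Commute.list_prod_right _ _ (by simpa using fun c _ => hT c)
  rw [foldr_fwdDiff_eq_prod, ← Module.End.mul_apply, ← hTl.eq, Module.End.mul_apply,
    ← foldr_fwdDiff_eq_prod, hf l hl, map_zero]

variable (A E) in
def backShiftₗ (n : ℕ) (b : A) : Module.End ℤ (A → E) :=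
  ∑ k ∈ range (n + 1), (-fwdDiffₗ A E b) ^ k

lemma backShiftₗ_apply (n : ℕ) (b : A) (f : A → E) :
    backShiftₗ A E n b f = ∑ k ∈ range (n + 1), (-1 : ℤ) ^ k • (fwdDiff b)^[k] f := by
  simp only [backShiftₗ, LinearMap.sum_apply]
  refine sum_congr rfl fun k _ => ?_
  rw [← neg_one_zsmul (fwdDiffₗ A E b), smul_pow, LinearMap.smul_apply, coe_fwdDiffₗ_pow]

lemma backShiftₗ_zero (n : ℕ) : backShiftₗ A E n 0 = 1 := by
  have : fwdDiffₗ A E (0 : A) = 0 := by ext; simp [fwdDiff]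
  simp [backShiftₗ, this, sum_range_succ']

lemma commute_backShiftₗ_fwdDiffₗ (n : ℕ) (b c : A) :
    Commute (backShiftₗ A E n b) (fwdDiffₗ A E c) :=
  Commute.sum_left _ _ _ fun k _ => ((commute_fwdDiffₗ (E := E) b c).neg_left).pow_left k

lemma commute_shiftₗ_fwdDiffₗ (b c : A) : Commute (shiftₗ A E b) (fwdDiffₗ A E c) :=
  (commute_fwdDiffₗ b c).add_left (Commute.one_left _)

lemma shiftₗ_add (b c : A) : shiftₗ A E (b + c) = shiftₗ A E b * shiftₗ A E c := by
  ext f x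
  simp [shiftₗ_apply, add_assoc]

lemma shiftₗ_eq_one_sub_neg_fwdDiffₗ (b : A) : shiftₗ A E b = 1 - -fwdDiffₗ A E b := by
  rw [sub_neg_eq_add, add_comm]
  rfl

lemma neg_fwdDiffₗ_pow_apply_eq_zero (hf : f ∈ algDegLT A E (n + 1)) (b : A) :
    ((-fwdDiffₗ A E b) ^ (n + 1)) f = 0 := by
  rw [neg_pow, Module.End.mul_apply, pow_fwdDiffₗ_apply_eq_zero hf le_rfl, map_zero]

lemma shiftₗ_backShiftₗ_apply (hf : f ∈ algDegLT A E (n + 1)) (b : A) :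
    shiftₗ A E b (backShiftₗ A E n b f) = f := by
  rw [← Module.End.mul_apply, shiftₗ_eq_one_sub_neg_fwdDiffₗ, backShiftₗ, mul_neg_geom_sum,
    LinearMap.sub_apply, neg_fwdDiffₗ_pow_apply_eq_zero hf, sub_zero, Module.End.one_apply]

lemma backShiftₗ_shiftₗ_apply (hf : f ∈ algDegLT A E (n + 1)) (b : A) :
    backShiftₗ A E n b (shiftₗ A E b f) = f := by
  rw [← Module.End.mul_apply, shiftₗ_eq_one_sub_neg_fwdDiffₗ, backShiftₗ, geom_sum_mul_neg,
    LinearMap.sub_apply, neg_fwdDiffₗ_pow_apply_eq_zero hf, sub_zero, Module.End.one_apply]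

lemma backShiftₗ_add_apply (hf : f ∈ algDegLT A E (n + 1)) (a b c : A) :
    backShiftₗ A E n (b + c) f (a + c) = backShiftₗ A E n b f a := by
  set g := shiftₗ A E c (backShiftₗ A E n (b + c) f)
  have hg : g ∈ algDegLT A E (n + 1) :=
    map_mem_algDegLT (commute_shiftₗ_fwdDiffₗ c)
      (map_mem_algDegLT (commute_backShiftₗ_fwdDiffₗ n (b + c)) hf)
  have hshift : shiftₗ A E b g = f := by
    rw [← Module.End.mul_apply, ← shiftₗ_add, shiftₗ_backShiftₗ_apply hf]
  calc backShiftₗ A E n (b + c) f (a + c) = g a := (shiftₗ_apply _ _ _).symm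
    _ = backShiftₗ A E n b (shiftₗ A E b g) a := by rw [backShiftₗ_shiftₗ_apply hg]
    _ = backShiftₗ A E n b f a := by rw [hshift]

lemma backShiftₗ_apply_eq_of_add_eq (hf : f ∈ algDegLT A E (n + 1)) {a b a' b' : A}
    (h : a + b' = a' + b) : backShiftₗ A E n b f a = backShiftₗ A E n b' f a' :=
  calc backShiftₗ A E n b f a = backShiftₗ A E n (b + b') f (a + b') :=
        (backShiftₗ_add_apply hf a b b').symm
    _ = backShiftₗ A E n (b' + b) f (a' + b) := by rw [h, add_comm b]
    _ = backShiftₗ A E n b' f a' := backShiftₗ_add_apply hf a' b' b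

lemma backShiftₗ_smul (n : ℕ) (b : A) (e : E) (f : A → E) :
    backShiftₗ A E n b (e • f) = e • backShiftₗ A E n b f := by
  simp only [backShiftₗ_apply, Finset.smul_sum, fwdDiff_iter_const_smul, smul_comm e]

end Ring

section Pullback

variable {A B E : Type*} [AddCommMonoid A] [AddCommMonoid B] [Ring E] (φ : A →+ B)

lemma fwdDiff_comp (F : B → E) (b : A) : fwdDiff (φ b) F ∘ φ = fwdDiff b (F ∘ φ) := by
  ext x
  simp [fwdDiff]

lemma foldr_fwdDiff_comp (F : B → E) (l : List A) :
    (l.map φ).foldr fwdDiff F ∘ φ = l.foldr fwdDiff (F ∘ φ) := by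
  induction l with
  | nil => rfl
  | cons c l ih => rw [List.map_cons, List.foldr_cons, List.foldr_cons, fwdDiff_comp, ih]

lemma comp_mem_algDegLT {F : B → E} {m : ℕ} (hF : F ∈ algDegLT B E m) :
    F ∘ φ ∈ algDegLT A E m := fun l hl => by
  rw [← foldr_fwdDiff_comp, hF _ (by simpa using hl)]
  rfl

lemma backShiftₗ_comp (n : ℕ) (b : A) (F : B → E) :
    backShiftₗ B E n (φ b) F ∘ φ = backShiftₗ A E n b (F ∘ φ) := by
  have h : ∀ k, (fwdDiff (φ b))^[k] F ∘ φ = (fwdDiff b)^[k] (F ∘ φ) := fun k =>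
    Function.Semiconj.iterate_right (f := fun G : B → E => G ∘ φ) (fwdDiff_comp φ · b) k F
  ext x
  simp only [backShiftₗ_apply, Function.comp_apply, Finset.sum_apply, Pi.smul_apply, ← h]

end Pullback

lemma backShiftₗ_mul_apply {R E : Type*} [Semiring R] [Ring E] {f : R → E}
    (hf : ∀ x y, f (x * y) = f x * f y) (n : ℕ) (a c d : R) :
    backShiftₗ R E n (a * d) f (a * c) = f a * backShiftₗ R E n d f c := by
  have hfa : f ∘ AddMonoidHom.mulLeft a = f a • f := funext (hf a)
  calc backShiftₗ R E n (a * d) f (a * c)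
      = (backShiftₗ R E n (AddMonoidHom.mulLeft a d) f ∘ AddMonoidHom.mulLeft a) c := rfl
    _ = f a * backShiftₗ R E n d f c := by
      rw [backShiftₗ_comp, hfa, backShiftₗ_smul]
      rfl

section Extension

variable {A B E : Type*} [AddCommMonoid A] [AddCommGroup B] [Ring E] {φ : A →+ B}
  {f : A → E} {n : ℕ}

variable (φ) in
noncomputable def algExtend (n : ℕ) (f : A → E) : B → E :=
  Function.extend (fun p : A × A => φ p.1 - φ p.2) (fun p => backShiftₗ A E n p.2 f p.1) 0

lemma algExtend_apply_sub (hφ : Function.Injective φ) (hf : f ∈ algDegLT A E (n + 1))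
    (a b : A) :
    algExtend φ n f (φ a - φ b) = backShiftₗ A E n b f a := by
  refine Function.FactorsThrough.extend_apply (fun p q hpq => ?_) (0 : B → E) (a, b)
  refine backShiftₗ_apply_eq_of_add_eq hf (hφ ?_)
  simpa only [map_add] using sub_eq_sub_iff_add_eq_add.mp hpq

lemma algExtend_comp (hφ : Function.Injective φ) (hf : f ∈ algDegLT A E (n + 1)) :
    algExtend φ n f ∘ φ = f := funext fun a => by
  simpa [backShiftₗ_zero] using algExtend_apply_sub hφ hf a 0

lemma apply_sub_eq_backShiftₗ {F : B → E} (hF : F ∈ algDegLT B E (n + 1)) (a b : A) :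
    F (φ a - φ b) = backShiftₗ A E n b (F ∘ φ) a :=
  calc F (φ a - φ b) = shiftₗ B E (φ b) (backShiftₗ B E n (φ b) F) (φ a - φ b) := by
        rw [shiftₗ_backShiftₗ_apply hF]
    _ = backShiftₗ B E n (φ b) F (φ a) := by rw [shiftₗ_apply, sub_add_cancel]
    _ = backShiftₗ A E n b (F ∘ φ) a := congrFun (backShiftₗ_comp φ n b F) a

theorem eq_of_comp_eq (hgen : ∀ x : B, ∃ a b : A, x = φ a - φ b) {F G : B → E} {m m' : ℕ}
    (hF : F ∈ algDegLT B E m) (hG : G ∈ algDegLT B E m') (h : F ∘ φ = G ∘ φ) : F = G :=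
  funext fun x => by
    obtain ⟨a, b, rfl⟩ := hgen x
    rw [apply_sub_eq_backShiftₗ (n := m + m') (algDegLT_mono (by omega) hF),
      apply_sub_eq_backShiftₗ (n := m + m') (algDegLT_mono (by omega) hG), h]

lemma fwdDiff_algExtend (hφ : Function.Injective φ) (hgen : ∀ x : B, ∃ a b : A, x = φ a - φ b)
    (hf : f ∈ algDegLT A E (n + 1)) (c d : A) :
    fwdDiff (φ c - φ d) (algExtend φ n f) =
      fun x => algExtend φ n (fwdDiff c f - fwdDiff d f) (x - φ d) := funext fun x => by
  obtain ⟨a, b, rfl⟩ := hgen x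
  have hdiff : fwdDiff c f - fwdDiff d f ∈ algDegLT A E (n + 1) :=
    sub_mem (map_mem_algDegLT (commute_fwdDiffₗ c) hf)
      (map_mem_algDegLT (commute_fwdDiffₗ d) hf)
  have hcomm (e : A) :
      backShiftₗ A E n (b + d) (fwdDiff e f) = fwdDiff e (backShiftₗ A E n (b + d) f) :=
    LinearMap.congr_fun (commute_backShiftₗ_fwdDiffₗ n (b + d) e).eq f
  have e1 : φ a - φ b + (φ c - φ d) = φ (a + c) - φ (b + d) := by simp only [map_add]; abel
  have e2 : φ a - φ b - φ d = φ a - φ (b + d) := by simp only [map_add]; abel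
  rw [fwdDiff, e1, e2, algExtend_apply_sub hφ hf, algExtend_apply_sub hφ hf,
    algExtend_apply_sub hφ hdiff, map_sub, Pi.sub_apply, hcomm, hcomm,
    ← backShiftₗ_add_apply hf a b d]
  simp only [fwdDiff]
  abel

theorem algExtend_mem_algDegLT (hφ : Function.Injective φ)
    (hgen : ∀ x : B, ∃ a b : A, x = φ a - φ b) {m : ℕ} (hm : m ≤ n + 1)
    (hf : f ∈ algDegLT A E m) :
    algExtend φ n f ∈ algDegLT B E m := by
  induction m generalizing f with
  | zero =>
    obtain rfl := mem_algDegLT_zero.mp hf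
    refine mem_algDegLT_zero.mpr (funext fun x => ?_)
    obtain ⟨a, b, rfl⟩ := hgen x
    rw [algExtend_apply_sub hφ (zero_mem _), map_zero]
    rfl
  | succ m ih =>
    refine mem_algDegLT_succ_iff.mpr fun y => ?_
    obtain ⟨c, d, rfl⟩ := hgen y
    have hdiff : fwdDiff c f - fwdDiff d f ∈ algDegLT A E m :=
      sub_mem (mem_algDegLT_succ_iff.mp hf c) (mem_algDegLT_succ_iff.mp hf d)
    rw [fwdDiff_algExtend hφ hgen (algDegLT_mono hm hf)]
    have hshift : (fun x => algExtend φ n (fwdDiff c f - fwdDiff d f) (x - φ d)) =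
        shiftₗ B E (-φ d) (algExtend φ n (fwdDiff c f - fwdDiff d f)) :=
      funext fun x => by rw [shiftₗ_apply, ← sub_eq_add_neg]
    rw [hshift]
    exact map_mem_algDegLT (commute_shiftₗ_fwdDiffₗ (-φ d)) (ih (by omega) hdiff)

end Extension

theorem algExtend_mul {A B E : Type*} [Semiring A] [Ring B] [CommRing E] {i : A →+* B}
    (hi : Function.Injective i) (hgen : ∀ x : B, ∃ a b : A, x = i a - i b) {f : A → E} {n : ℕ}
    (hf : f ∈ algDegLT A E (n + 1)) (hmul : ∀ x y, f (x * y) = f x * f y) (x y : B) :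
    algExtend (i : A →+ B) n f (x * y) =
      algExtend (i : A →+ B) n f x * algExtend (i : A →+ B) n f y := by
  set F := algExtend (i : A →+ B) n f
  obtain ⟨c, d, rfl⟩ := hgen y
  have hF : F ∈ algDegLT B E (n + 1) := algExtend_mem_algDegLT hi hgen le_rfl hf
  have hmulRight : (fun z => F (z * (i c - i d))) ∈ algDegLT B E (n + 1) :=
    comp_mem_algDegLT (AddMonoidHom.mulRight _) hF
  have hmulConst : (fun z => F z * F (i c - i d)) ∈ algDegLT B E (n + 1) := by
    have : (fun z => F z * F (i c - i d)) = F (i c - i d) • F := funext fun z => mul_comm _ _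
    rw [this]
    exact Submodule.smul_mem _ _ hF
  have hagree : (fun z => F (z * (i c - i d))) ∘ i = (fun z => F z * F (i c - i d)) ∘ i :=
    funext fun a => by
      have e : i a * (i c - i d) = i (a * c) - i (a * d) := by rw [mul_sub, map_mul, map_mul]
      have hFi : F (i a) = f a := congrFun (algExtend_comp (φ := (i : A →+ B)) hi hf) a
      have hsub (a b : A) : F (i a - i b) = backShiftₗ A E n b f a :=
        algExtend_apply_sub (φ := (i : A →+ B)) hi hf a b
      simp only [Function.comp_apply]
      rw [e, hsub, hsub, backShiftₗ_mul_apply hmul, hFi]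
  exact congrFun (eq_of_comp_eq (φ := (i : A →+ B)) hgen hmulRight hmulConst hagree) x

/-- Theorem of Dress: if `f : A → E` is algebraic of degree `n` and `i : A → Ā` is the
canonical (injective, with differences generating) map into the Grothendieck ring `Ā`,
then there is a unique algebraic map `f̄ : Ā → E` with `f̄ ∘ i = f`; moreover `f̄` is
algebraic of degree `n`, and is multiplicative whenever `f` is. -/
theorem stmt8 {A Abar E : Type*} [CommSemiring A] [CommRing Abar] [CommRing E]
    (i : A →+* Abar) (hinj : Function.Injective i)
    (hgen : ∀ x : Abar, ∃ a b : A, x = i a - i b)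
    (f : A → E) (n : ℕ) (hf : IsAlgDeg f n) :
    ∃ fbar : Abar → E,
      (fbar ∘ i = f) ∧ IsAlgDeg fbar n ∧
      (∀ gbar : Abar → E, (gbar ∘ i = f ∧ ∃ k : ℕ, AlgBound gbar k) → gbar = fbar) ∧
      ((∀ x y : A, f (x * y) = f x * f y) →
        ∀ x y : Abar, fbar (x * y) = fbar x * fbar y) := by
  set φ : A →+ Abar := (i : A →+ Abar)
  have hf' : f ∈ algDegLT A E (n + 1) := algBound_iff_mem_algDegLT.mp hf.1
  have hcomp : algExtend φ n f ∘ φ = f := algExtend_comp hinj hf'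
  have hdeg : algExtend φ n f ∈ algDegLT Abar E (n + 1) :=
    algExtend_mem_algDegLT hinj hgen le_rfl hf'
  refine ⟨algExtend φ n f, hcomp, ⟨algBound_iff_mem_algDegLT.mpr hdeg, fun m hm => ?_⟩, ?_,
    fun hmul => algExtend_mul hinj hgen hf' hmul⟩
  · refine hf.2 m (algBound_iff_mem_algDegLT.mpr ?_)
    rw [← hcomp]
    exact comp_mem_algDegLT φ (algBound_iff_mem_algDegLT.mp hm)
  · rintro g ⟨hg, k, hk⟩
    exact eq_of_comp_eq (φ := φ) hgen (algBound_iff_mem_algDegLT.mp hk) hdeg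
      (hg.trans hcomp.symm)
end

section
/- For a right-free (K,G)-biset V and a right-free (G,H)-biset U, the composite biset V ×_G U is right-free over H, and there is a natural isomorphism of K-sets s_{V ×_G U}(X) ≅ s_V(s_U(X)) for every H-set X. -/
/-- The tensor-induced action on `Xⁿ`: given the wreath-product data `π, h` coming from a
right-free `(G,H)`-biset with chosen orbit representatives, and an `H`-action `act` on `X`,
`g` acts on `x : Fin n → X` by `(g·x)ᵢ = h_{π⁻¹(i)} · x_{π⁻¹(i)}`. -/
def sAct {G H X : Type*} [Group G] {n : ℕ} (π : G → Equiv.Perm (Fin n))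
    (h : G → Fin n → H) (act : H → X → X) (g : G) (x : Fin n → X) : Fin n → X :=
  fun i => act (h g ((π g)⁻¹ i)) (x ((π g)⁻¹ i))

open MulOpposite

/-- The relation whose quotient is the composite biset `V ×_G U`: `(v,u) ~ (vg, g⁻¹u)`. -/
def bisetRel (G : Type*) [Group G] {V U : Type*} [MulAction Gᵐᵒᵖ V] [MulAction G U]
    (p q : V × U) : Prop :=
  ∃ g : G, q.1 = op g • p.1 ∧ q.2 = g⁻¹ • p.2

/-- The composite biset `V ×_G U`. -/
def CompositeBiset (G : Type*) [Group G] (V U : Type*) [MulAction Gᵐᵒᵖ V]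
    [MulAction G U] : Type _ :=
  Quot (bisetRel G (V := V) (U := U))

/-- The left `K`-action on `V ×_G U`, `k·[v,u] = [k·v, u]`. -/
def leftK {K G V U : Type*} [Group K] [Group G]
    [MulAction K V] [MulAction Gᵐᵒᵖ V] [SMulCommClass K Gᵐᵒᵖ V] [MulAction G U]
    (k : K) : CompositeBiset G V U → CompositeBiset G V U :=
  Quot.lift (fun p => Quot.mk _ (k • p.1, p.2)) (by
    rintro a b ⟨g, h1, h2⟩
    exact Quot.sound ⟨g, by rw [h1]; exact smul_comm _ _ _, h2⟩)

/-- The right `H`-action on `V ×_G U`, `[v,u]·b = [v, u·b]`. -/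
def rightH {G H V U : Type*} [Group G] [Group H]
    [MulAction Gᵐᵒᵖ V] [MulAction G U] [MulAction Hᵐᵒᵖ U] [SMulCommClass G Hᵐᵒᵖ U]
    (b : H) : CompositeBiset G V U → CompositeBiset G V U :=
  Quot.lift (fun p => Quot.mk _ (p.1, op b • p.2)) (by
    rintro a c ⟨g, h1, h2⟩
    refine Quot.sound ⟨g, h1, ?_⟩
    rw [h2]; exact (smul_comm _ _ _).symm)

/-! Every element of `V ×_G U` is uniquely of the form `[v i, u j]·b`, so the pairs `(i, j)`
index the `H`-orbits and `V ×_G U` is right-free. Any other system of representatives `w l`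
differs from this one by a bijection `l ↦ (i, j)` and twisting elements `c l ∈ H`, and it carries
the conjugate of the nested wreath data `(πV, hV)`, `(πU, hU)`; twisting by `c` and currying then
intertwines `s_{V ×_G U}(X)` with `s_V(s_U(X))`. -/

section CompositeBiset

variable {K G H V U : Type*} [Group K] [Group G] [Group H]
  [MulAction K V] [MulAction Gᵐᵒᵖ V] [SMulCommClass K Gᵐᵒᵖ V]
  [MulAction G U] [MulAction Hᵐᵒᵖ U] [SMulCommClass G Hᵐᵒᵖ U]

theorem bisetRel_equivalence : Equivalence (bisetRel G (V := V) (U := U)) where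
  refl _ := ⟨1, by simp, by simp⟩
  symm := by
    rintro p q ⟨g, h1, h2⟩
    exact ⟨g⁻¹, by rw [h1, smul_smul, ← op_mul, mul_inv_cancel, op_one, one_smul],
      by rw [h2, inv_inv, smul_inv_smul]⟩
  trans := by
    rintro p q r ⟨g, h1, h2⟩ ⟨g', h1', h2'⟩
    exact ⟨g * g', by rw [h1', h1, smul_smul, ← op_mul], by rw [h2', h2, smul_smul, mul_inv_rev]⟩

theorem compositeBiset_mk_eq_mk_iff {p q : V × U} :
    (Quot.mk _ p : CompositeBiset G V U) = Quot.mk _ q ↔ bisetRel G p q :=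
  Quot.eq.trans bisetRel_equivalence.eqvGen_iff

theorem compositeBiset_mk_op_smul (g : G) (x : V) (y : U) :
    (Quot.mk _ (op g • x, y) : CompositeBiset G V U) = Quot.mk _ (x, g • y) :=
  (Quot.sound ⟨g, rfl, by rw [inv_smul_smul]⟩).symm

theorem rightH_rightH (b c : H) (x : CompositeBiset G V U) :
    rightH b (rightH c x) = rightH (c * b) x := by
  induction x using Quot.ind with
  | _ p => exact congrArg (fun y => Quot.mk _ (p.1, y)) (by rw [smul_smul, ← op_mul])

theorem rightH_one (x : CompositeBiset G V U) : rightH (1 : H) x = x := by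
  induction x using Quot.ind with
  | _ p => exact congrArg (fun y => Quot.mk _ (p.1, y)) (one_smul _ p.2)

theorem leftK_rightH (k : K) (b : H) (x : CompositeBiset G V U) :
    leftK k (rightH b x) = rightH b (leftK k x) := by
  induction x using Quot.ind with
  | _ p => rfl

end CompositeBiset

theorem eq_of_op_smul_eq_op_smul {G α ι : Type*} [Group G] [MulAction Gᵐᵒᵖ α] {r : ι → α}
    (hfree : ∀ (x : α) (g g' : G), op g • x = op g' • x → g = g')
    (hreps : ∀ x : α, ∃! i : ι, ∃ g : G, x = op g • r i)
    {i i' : ι} {g g' : G} (h : op g • r i = op g' • r i') : i = i' ∧ g = g' := by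
  obtain rfl : i = i' := (hreps (op g • r i)).unique ⟨g, rfl⟩ ⟨g', h⟩
  exact ⟨rfl, hfree _ _ _ h⟩

section Representatives

variable {K G H V U ι κ : Type*} [Group K] [Group G] [Group H]
  [MulAction K V] [MulAction Gᵐᵒᵖ V] [SMulCommClass K Gᵐᵒᵖ V]
  [MulAction G U] [MulAction Hᵐᵒᵖ U] [SMulCommClass G Hᵐᵒᵖ U]
  {v : ι → V} {u : κ → U}

def compositeRep (v : ι → V) (u : κ → U) (a : ι × κ) : CompositeBiset G V U :=
  Quot.mk _ (v a.1, u a.2)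

theorem exists_eq_rightH_compositeRep
    (hrepsV : ∀ x : V, ∃! i : ι, ∃ g : G, x = op g • v i)
    (hrepsU : ∀ x : U, ∃! j : κ, ∃ b : H, x = op b • u j) (x : CompositeBiset G V U) :
    ∃ (a : ι × κ) (b : H), x = rightH b (compositeRep v u a) := by
  induction x using Quot.ind with
  | _ p =>
    obtain ⟨i, ⟨g, hg⟩, -⟩ := hrepsV p.1
    obtain ⟨j, ⟨b, hb⟩, -⟩ := hrepsU (g • p.2)
    refine ⟨(i, j), b, ?_⟩
    calc Quot.mk _ p = Quot.mk _ (op g • v i, p.2) := by rw [← hg]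
      _ = Quot.mk _ (v i, g • p.2) := compositeBiset_mk_op_smul g (v i) p.2
      _ = _ := by rw [hb]; rfl

theorem leftK_compositeRep {πV : K → ι → ι} {hV : K → ι → G} {πU : G → κ → κ}
    {hU : G → κ → H} (hcV : ∀ (k : K) (i : ι), k • v i = op (hV k i) • v (πV k i))
    (hcU : ∀ (g : G) (j : κ), g • u j = op (hU g j) • u (πU g j)) (k : K) (a : ι × κ) :
    leftK k (compositeRep (G := G) v u a) =
      rightH (hU (hV k a.1) a.2) (compositeRep v u (πV k a.1, πU (hV k a.1) a.2)) :=
  calc Quot.mk _ (k • v a.1, u a.2) = Quot.mk _ (op (hV k a.1) • v (πV k a.1), u a.2) := by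
        rw [hcV]
    _ = Quot.mk _ (v (πV k a.1), hV k a.1 • u a.2) := compositeBiset_mk_op_smul _ _ _
    _ = _ := by rw [hcU]; rfl

variable (hfreeV : ∀ (x : V) (g g' : G), op g • x = op g' • x → g = g')
  (hrepsV : ∀ x : V, ∃! i : ι, ∃ g : G, x = op g • v i)
  (hfreeU : ∀ (x : U) (b b' : H), op b • x = op b' • x → b = b')
  (hrepsU : ∀ x : U, ∃! j : κ, ∃ b : H, x = op b • u j)
include hfreeV hrepsV hfreeU hrepsU

theorem eq_of_rightH_compositeRep_eq {a a' : ι × κ} {b b' : H}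
    (h : rightH b (compositeRep (G := G) v u a) = rightH b' (compositeRep v u a')) :
    a = a' ∧ b = b' := by
  obtain ⟨g, hv, hu⟩ := compositeBiset_mk_eq_mk_iff.mp h
  obtain ⟨hi, rfl⟩ := eq_of_op_smul_eq_op_smul hfreeV hrepsV (g := 1) (g' := g)
    (by rw [op_one, one_smul]; exact hv)
  rw [inv_one, one_smul] at hu
  obtain ⟨hj, hb⟩ := eq_of_op_smul_eq_op_smul hfreeU hrepsU hu
  exact ⟨Prod.ext hi.symm hj.symm, hb.symm⟩

theorem eq_of_rightH_eq_rightH (x : CompositeBiset G V U) {b b' : H}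
    (h : rightH b x = rightH b' x) : b = b' := by
  obtain ⟨a, c, rfl⟩ := exists_eq_rightH_compositeRep hrepsV hrepsU x
  rw [rightH_rightH, rightH_rightH] at h
  exact mul_left_cancel (eq_of_rightH_compositeRep_eq hfreeV hrepsV hfreeU hrepsU h).2

variable {ι' : Type*} {w : ι' → CompositeBiset G V U} {p : ι' → ι × κ} {c : ι' → H}

theorem bijective_of_eq_rightH_compositeRep
    (hreps : ∀ x : CompositeBiset G V U, ∃! l : ι', ∃ b : H, x = rightH b (w l))
    (hw : ∀ l, w l = rightH (c l) (compositeRep v u (p l))) : Function.Bijective p := by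
  constructor
  · intro l l' hp
    refine (hreps (w l')).unique ⟨(c l)⁻¹ * c l', ?_⟩ ⟨1, (rightH_one _).symm⟩
    rw [hw, hw, rightH_rightH, hp, mul_inv_cancel_left]
  · intro a
    obtain ⟨l, ⟨b, hb⟩, -⟩ := hreps (compositeRep v u a)
    rw [hw, rightH_rightH, ← rightH_one (H := H) (compositeRep v u a)] at hb
    exact ⟨l, (eq_of_rightH_compositeRep_eq hfreeV hrepsV hfreeU hrepsU hb).1.symm⟩

theorem wreath_data_eq_of_eq_rightH_compositeRep {πV : K → ι → ι} {hV : K → ι → G}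
    {πU : G → κ → κ} {hU : G → κ → H}
    (hcV : ∀ (k : K) (i : ι), k • v i = op (hV k i) • v (πV k i))
    (hcU : ∀ (g : G) (j : κ), g • u j = op (hU g j) • u (πU g j))
    {πW : K → ι' → ι'} {hW : K → ι' → H}
    (hcW : ∀ (k : K) (l : ι'), leftK k (w l) = rightH (hW k l) (w (πW k l)))
    (hw : ∀ l, w l = rightH (c l) (compositeRep v u (p l))) (k : K) (l : ι') :
    p (πW k l) = (πV k (p l).1, πU (hV k (p l).1) (p l).2) ∧
      c (πW k l) * hW k l = hU (hV k (p l).1) (p l).2 * c l := by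
  have h := hcW k l
  rw [hw, hw, leftK_rightH, leftK_compositeRep hcV hcU, rightH_rightH, rightH_rightH] at h
  obtain ⟨hp, hc⟩ := eq_of_rightH_compositeRep_eq hfreeV hrepsV hfreeU hrepsU h
  exact ⟨hp.symm, hc.symm⟩

end Representatives

def twistedCurry {ι' ι κ H X : Type*} [Group H] [MulAction H X] (e : ι' ≃ ι × κ)
    (c : ι' → H) : (ι' → X) ≃ (ι → κ → X) where
  toFun f i j := c (e.symm (i, j)) • f (e.symm (i, j))
  invFun F l := (c l)⁻¹ • F (e l).1 (e l).2
  left_inv f := by funext l; simp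
  right_inv F := by funext i j; simp

theorem twistedCurry_sAct {K G H X : Type*} [Group K] [Group G] [Group H] [MulAction H X]
    {N nV nU : ℕ} {πW : K → Equiv.Perm (Fin N)} {hW : K → Fin N → H}
    {πV : K → Equiv.Perm (Fin nV)} {hV : K → Fin nV → G}
    {πU : G → Equiv.Perm (Fin nU)} {hU : G → Fin nU → H}
    (e : Fin N ≃ Fin nV × Fin nU) (c : Fin N → H)
    (he : ∀ k l, e (πW k l) = (πV k (e l).1, πU (hV k (e l).1) (e l).2))
    (hc : ∀ k l, c (πW k l) * hW k l = hU (hV k (e l).1) (e l).2 * c l)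
    (k : K) (f : Fin N → X) :
    twistedCurry e c (sAct πW hW (· • ·) k f) =
      sAct πV hV (sAct πU hU (· • ·)) k (twistedCurry e c f) := by
  funext i j
  obtain ⟨l, hl⟩ := (πW k).surjective (e.symm (i, j))
  have hij : (i, j) = (πV k (e l).1, πU (hV k (e l).1) (e l).2) := by
    rw [← he, hl, Equiv.apply_symm_apply]
  obtain ⟨rfl, rfl⟩ := Prod.ext_iff.mp hij
  simp [twistedCurry, sAct, ← he, smul_smul, hc]

theorem stmt11_general {K G H V U : Type*} [Group K] [Group G] [Group H]
    [MulAction K V] [MulAction Gᵐᵒᵖ V] [SMulCommClass K Gᵐᵒᵖ V]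
    [MulAction G U] [MulAction Hᵐᵒᵖ U] [SMulCommClass G Hᵐᵒᵖ U]
    (hfreeV : ∀ (x : V) (g g' : G), op g • x = op g' • x → g = g')
    (hfreeU : ∀ (x : U) (b b' : H), op b • x = op b' • x → b = b')
    {nV nU : ℕ} (v : Fin nV → V) (u : Fin nU → U)
    (hrepsV : ∀ x : V, ∃! i : Fin nV, ∃ g : G, x = op g • v i)
    (hrepsU : ∀ x : U, ∃! i : Fin nU, ∃ b : H, x = op b • u i)
    (πV : K → Equiv.Perm (Fin nV)) (hV : K → Fin nV → G)
    (hcV : ∀ (k : K) (i : Fin nV), k • v i = op (hV k i) • v (πV k i))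
    (πU : G → Equiv.Perm (Fin nU)) (hU : G → Fin nU → H)
    (hcU : ∀ (g : G) (i : Fin nU), g • u i = op (hU g i) • u (πU g i))
    (X : Type*) [MulAction H X] :
    (∀ (x : CompositeBiset G V U) (b b' : H), rightH b x = rightH b' x → b = b') ∧
    ∀ {N : ℕ} (w : Fin N → CompositeBiset G V U)
      (πW : K → Equiv.Perm (Fin N)) (hW : K → Fin N → H),
      (∀ x : CompositeBiset G V U, ∃! i : Fin N, ∃ b : H, x = rightH b (w i)) →
      (∀ (k : K) (i : Fin N), leftK k (w i) = rightH (hW k i) (w (πW k i))) →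
      ∃ e : (Fin N → X) ≃ (Fin nV → Fin nU → X),
        ∀ (k : K) (f : Fin N → X),
          e (sAct πW hW (fun b p => b • p) k f) =
            sAct πV hV (sAct πU hU (fun b p => b • p)) k (e f) := by
  refine ⟨fun x _ _ => eq_of_rightH_eq_rightH hfreeV hrepsV hfreeU hrepsU x,
    fun w πW hW hreps hcW => ?_⟩
  choose p c hw using fun l => exists_eq_rightH_compositeRep hrepsV hrepsU (w l)
  have hwreath := wreath_data_eq_of_eq_rightH_compositeRep hfreeV hrepsV hfreeU hrepsU
    hcV hcU hcW hw
  let e := Equiv.ofBijective p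
    (bijective_of_eq_rightH_compositeRep hfreeV hrepsV hfreeU hrepsU hreps hw)
  exact ⟨twistedCurry e c,
    twistedCurry_sAct e c (fun k l => (hwreath k l).1) (fun k l => (hwreath k l).2)⟩

/-- For a right-free `(K,G)`-biset `V` and a right-free `(G,H)`-biset `U`, the composite
`V ×_G U` is right-free over `H`, and `s_{V ×_G U}(X) ≅ s_V(s_U(X))` as `K`-sets, for
every `H`-set `X` (for any choice of tensor-induction data on the composite biset). -/
theorem stmt11 {K G H V U : Type*} [Group K] [Group G] [Group H] [Finite V] [Finite U]
    [MulAction K V] [MulAction Gᵐᵒᵖ V] [SMulCommClass K Gᵐᵒᵖ V]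
    [MulAction G U] [MulAction Hᵐᵒᵖ U] [SMulCommClass G Hᵐᵒᵖ U]
    (hfreeV : ∀ (x : V) (g g' : G), op g • x = op g' • x → g = g')
    (hfreeU : ∀ (x : U) (b b' : H), op b • x = op b' • x → b = b')
    {nV nU : ℕ} (v : Fin nV → V) (u : Fin nU → U)
    (hrepsV : ∀ x : V, ∃! i : Fin nV, ∃ g : G, x = op g • v i)
    (hrepsU : ∀ x : U, ∃! i : Fin nU, ∃ b : H, x = op b • u i)
    (πV : K → Equiv.Perm (Fin nV)) (hV : K → Fin nV → G)
    (hcV : ∀ (k : K) (i : Fin nV), k • v i = op (hV k i) • v (πV k i))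
    (πU : G → Equiv.Perm (Fin nU)) (hU : G → Fin nU → H)
    (hcU : ∀ (g : G) (i : Fin nU), g • u i = op (hU g i) • u (πU g i))
    (X : Type*) [MulAction H X] :
    (∀ (x : CompositeBiset G V U) (b b' : H), rightH b x = rightH b' x → b = b') ∧
    ∀ {N : ℕ} (w : Fin N → CompositeBiset G V U)
      (πW : K → Equiv.Perm (Fin N)) (hW : K → Fin N → H),
      (∀ x : CompositeBiset G V U, ∃! i : Fin N, ∃ b : H, x = rightH b (w i)) →
      (∀ (k : K) (i : Fin N), leftK k (w i) = rightH (hW k i) (w (πW k i))) →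
      ∃ e : (Fin N → X) ≃ (Fin nV → Fin nU → X),
        ∀ (k : K) (f : Fin N → X),
          e (sAct πW hW (fun b p => b • p) k f) =
            sAct πV hV (sAct πU hU (fun b p => b • p)) k (e f) :=
  stmt11_general hfreeV hfreeU v u hrepsV hrepsU πV hV hcV πU hU hcU X
end

section
/- For a right-free (G,H)-biset U and a representation RH-module M over a commutative ring R, tensor induction commutes with duality: t_U(M°) ≅ t_U(M)° as RG-modules, naturally in M, where M° = Hom_R(M, R). -/
/-! The isomorphism is the pairing `⨂ fᵢ ↦ (⨂ mᵢ ↦ ∏ fᵢ mᵢ)`, i.e. Mathlib's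
`PiTensorProduct.dualDistribEquiv`, bijective because `M` is finite free. On pure tensors,
equivariance reduces (after reindexing the product along `π g`) to `π g⁻¹ = (π g)⁻¹` and
`h g⁻¹ (π g i) = (h g i)⁻¹`. Both come from `g⁻¹ • u (π g i) = op (h g i)⁻¹ • u i`, by uniqueness
of the orbit representative and freeness of the right action. -/

open scoped TensorProduct

/-- Tensor induction of modules: `t_U(M) = M^{⊗n}` with `G`-action
`g·(m₁⊗⋯⊗mₙ) = (h_{π⁻¹(1)}m_{π⁻¹(1)})⊗⋯⊗(h_{π⁻¹(n)}m_{π⁻¹(n)})`, where `π, h` is the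
wreath-product data of the right-free biset `U` and `ρ` gives the `H`-action on `M`. -/
noncomputable def tInd {G H R M : Type*} [Group G] [CommRing R]
    [AddCommGroup M] [Module R M] {n : ℕ}
    (π : G → Equiv.Perm (Fin n)) (h : G → Fin n → H)
    (ρ : H → (M ≃ₗ[R] M)) (g : G) :
    (⨂[R] _ : Fin n, M) ≃ₗ[R] (⨂[R] _ : Fin n, M) :=
  (PiTensorProduct.reindex R (fun _ : Fin n => M) (π g)).trans
    (PiTensorProduct.congr fun i => ρ (h g ((π g)⁻¹ i)))

open MulOpposite

open PiTensorProduct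

section Biset

variable {G H U ι : Type*} [Group G] [Group H]
  [MulAction G U] [MulAction Hᵐᵒᵖ U] [SMulCommClass G Hᵐᵒᵖ U] (u : ι → U)

theorem eq_and_eq_of_op_smul_eq (hfree : ∀ (x : U) (b b' : H), op b • x = op b' • x → b = b')
    (hreps : ∀ x : U, ∃! i : ι, ∃ b : H, x = op b • u i)
    {i j : ι} {a b : H} (hab : op a • u i = op b • u j) : i = j ∧ a = b := by
  obtain ⟨k, -, huniq⟩ := hreps (op a • u i)
  obtain rfl : i = k := huniq i ⟨a, rfl⟩
  obtain rfl : j = i := huniq j ⟨b, hab⟩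
  exact ⟨rfl, hfree _ _ _ hab⟩

theorem wreath_data_inv (hfree : ∀ (x : U) (b b' : H), op b • x = op b' • x → b = b')
    (hreps : ∀ x : U, ∃! i : ι, ∃ b : H, x = op b • u i)
    (π : G → Equiv.Perm ι) (h : G → ι → H)
    (hcompat : ∀ (g : G) (i : ι), g • u i = op (h g i) • u (π g i)) (g : G) (i : ι) :
    π g⁻¹ (π g i) = i ∧ h g⁻¹ (π g i) = (h g i)⁻¹ := by
  refine eq_and_eq_of_op_smul_eq u hfree hreps ?_
  calc op (h g⁻¹ (π g i)) • u (π g⁻¹ (π g i)) = g⁻¹ • u (π g i) := (hcompat _ _).symm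
    _ = g⁻¹ • (op (h g i)⁻¹ • g • u i) := by
      rw [hcompat g i, op_inv, inv_smul_smul]
    _ = op (h g i)⁻¹ • u i := by rw [smul_comm, inv_smul_smul]

end Biset

theorem dualDistrib_tInd_dualMap {G H R M : Type*} [Group G] [Group H] [CommRing R]
    [AddCommGroup M] [Module R M] {n : ℕ} (π : G → Equiv.Perm (Fin n)) (h : G → Fin n → H)
    (ρ : H → (M ≃ₗ[R] M)) (g : G) (hπ : ∀ i, π g⁻¹ (π g i) = i)
    (hh : ∀ i, h g⁻¹ (π g i) = (h g i)⁻¹) (x : ⨂[R] _ : Fin n, Module.Dual R M) :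
    dualDistrib (tInd π h (fun b => (ρ b⁻¹).dualMap) g x) =
      (tInd π h ρ g⁻¹).dualMap (dualDistrib x) := by
  suffices dualDistrib ∘ₗ (tInd π h (fun b => (ρ b⁻¹).dualMap) g).toLinearMap =
      (tInd π h ρ g⁻¹).dualMap.toLinearMap ∘ₗ dualDistrib from LinearMap.congr_fun this x
  have hσ : π g⁻¹ = (π g)⁻¹ := Equiv.ext fun i => by simpa using hπ ((π g)⁻¹ i)
  ext f m
  simp only [LinearMap.compMultilinearMap_apply, LinearMap.coe_comp, LinearEquiv.coe_coe,
    Function.comp_apply, tInd, LinearEquiv.trans_apply, reindex_tprod, congr_tprod,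
    dualDistrib_apply, LinearEquiv.dualMap_apply, hσ, hh, Equiv.Perm.inv_def, Equiv.symm_symm]
  exact Fintype.prod_equiv (π g).symm _ _ fun i => by rw [Equiv.apply_symm_apply]

theorem stmt13_general {G H U R M : Type*} [Group G] [Group H]
    [MulAction G U] [MulAction Hᵐᵒᵖ U] [SMulCommClass G Hᵐᵒᵖ U]
    [CommRing R] [AddCommGroup M] [Module R M] [Module.Free R M] [Module.Finite R M]
    (hfree : ∀ (x : U) (b b' : H), op b • x = op b' • x → b = b')
    {n : ℕ} (u : Fin n → U)
    (hreps : ∀ x : U, ∃! i : Fin n, ∃ b : H, x = op b • u i)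
    (π : G → Equiv.Perm (Fin n)) (h : G → Fin n → H)
    (hcompat : ∀ (g : G) (i : Fin n), g • u i = op (h g i) • u (π g i))
    (ρ : H →* (M ≃ₗ[R] M)) :
    ∃ e : (⨂[R] _ : Fin n, Module.Dual R M) ≃ₗ[R] Module.Dual R (⨂[R] _ : Fin n, M),
      ∀ (g : G) (x : ⨂[R] _ : Fin n, Module.Dual R M),
        e (tInd π h (fun b => (ρ b⁻¹).dualMap) g x) =
          (tInd π h (fun b => ρ b) g⁻¹).dualMap (e x) :=
  ⟨dualDistribEquiv, fun g x =>
    have hinv := wreath_data_inv u hfree hreps π h hcompat g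
    dualDistrib_tInd_dualMap π h ρ g (fun i => (hinv i).1) (fun i => (hinv i).2) x⟩

/-- Tensor induction commutes with duality: `t_U(M°) ≅ t_U(M)°` as `RG`-modules, for a
representation (finitely generated `R`-free) `RH`-module `M`. -/
theorem stmt13 {G H U R M : Type*} [Group G] [Group H] [Finite U]
    [MulAction G U] [MulAction Hᵐᵒᵖ U] [SMulCommClass G Hᵐᵒᵖ U]
    [CommRing R] [AddCommGroup M] [Module R M] [Module.Free R M] [Module.Finite R M]
    (hfree : ∀ (x : U) (b b' : H), op b • x = op b' • x → b = b')
    {n : ℕ} (u : Fin n → U)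
    (hreps : ∀ x : U, ∃! i : Fin n, ∃ b : H, x = op b • u i)
    (π : G → Equiv.Perm (Fin n)) (h : G → Fin n → H)
    (hcompat : ∀ (g : G) (i : Fin n), g • u i = op (h g i) • u (π g i))
    (ρ : H →* (M ≃ₗ[R] M)) :
    ∃ e : (⨂[R] _ : Fin n, Module.Dual R M) ≃ₗ[R] Module.Dual R (⨂[R] _ : Fin n, M),
      ∀ (g : G) (x : ⨂[R] _ : Fin n, Module.Dual R M),
        e (tInd π h (fun b => (ρ b⁻¹).dualMap) g x) =
          (tInd π h (fun b => ρ b) g⁻¹).dualMap (e x) :=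
  stmt13_general hfree u hreps π h hcompat ρ
end

section
/- For a right-free (G,H)-biset U and a finite H-set X, there is a natural isomorphism of RG-modules t_U(RX) ≅ R·s_U(X), i.e., tensor induction of a permutation module is the permutation module of the tensor-induced set. -/
open scoped TensorProduct

open MulOpposite

open PiTensorProduct

theorem Module.Basis.repr_apply_eq_mapDomain {ι κ R M N : Type*} [Semiring R]
    [AddCommMonoid M] [Module R M] [AddCommMonoid N] [Module R N]
    (b : Module.Basis ι R M) (c : Module.Basis κ R N) (T : M →ₗ[R] N) (f : ι → κ)
    (hT : ∀ i, T (b i) = c (f i)) (v : M) :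
    c.repr (T v) = Finsupp.mapDomain f (b.repr v) := by
  have hcomm : c.repr.toLinearMap ∘ₗ T = Finsupp.lmapDomain R R f ∘ₗ b.repr.toLinearMap :=
    b.ext fun i => by simp [hT]
  exact LinearMap.congr_fun hcomm v

theorem tInd_tprod {G H R M : Type*} [Group G] [CommRing R] [AddCommGroup M] [Module R M]
    {n : ℕ} (π : G → Equiv.Perm (Fin n)) (h : G → Fin n → H) (ρ : H → (M ≃ₗ[R] M)) (g : G)
    (m : Fin n → M) :
    tInd π h ρ g (tprod R m) = tprod R fun i => ρ (h g ((π g)⁻¹ i)) (m ((π g)⁻¹ i)) := by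
  rw [tInd, LinearEquiv.trans_apply, reindex_tprod, congr_tprod]
  rfl

theorem tInd_tprod_single {G H R X : Type*} [Group G] [Group H] [CommRing R] [MulAction H X]
    {n : ℕ} (π : G → Equiv.Perm (Fin n)) (h : G → Fin n → H) (g : G) (x : Fin n → X) :
    tInd π h (fun b => Finsupp.domLCongr (MulAction.toPerm b)) g
        (tprod R fun i => Finsupp.single (x i) (1 : R)) =
      tprod R fun i => Finsupp.single (sAct π h (fun b p => b • p) g x i) 1 := by
  rw [tInd_tprod]
  simp only [Finsupp.domLCongr_single]
  rfl

theorem stmt14_general {G H R X : Type*} [Group G] [Group H]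
    [CommRing R] [MulAction H X]
    {n : ℕ}
    (π : G → Equiv.Perm (Fin n)) (h : G → Fin n → H) :
    ∃ e : (⨂[R] _ : Fin n, (X →₀ R)) ≃ₗ[R] ((Fin n → X) →₀ R),
      ∀ (g : G) (v : ⨂[R] _ : Fin n, (X →₀ R)),
        e (tInd π h (fun b => Finsupp.domLCongr (MulAction.toPerm b)) g v) =
          Finsupp.mapDomain (sAct π h (fun b p => b • p) g) (e v) := by
  let b := Basis.piTensorProduct fun _ : Fin n => Finsupp.basisSingleOne (R := R) (ι := X)
  refine ⟨b.repr, fun g v => b.repr_apply_eq_mapDomain b _ _ (fun x => ?_) v⟩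
  simp only [b, Basis.piTensorProduct_apply, Finsupp.coe_basisSingleOne,
    LinearEquiv.coe_coe, tInd_tprod_single]

/-- Tensor induction of a permutation module is the permutation module of the
tensor-induced set: `t_U(RX) ≅ R·s_U(X)` as `RG`-modules. -/
theorem stmt14 {G H U R X : Type*} [Group G] [Group H] [Finite U]
    [MulAction G U] [MulAction Hᵐᵒᵖ U] [SMulCommClass G Hᵐᵒᵖ U]
    [CommRing R] [Fintype X] [MulAction H X]
    (hfree : ∀ (x : U) (b b' : H), op b • x = op b' • x → b = b')
    {n : ℕ} (u : Fin n → U)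
    (hreps : ∀ x : U, ∃! i : Fin n, ∃ b : H, x = op b • u i)
    (π : G → Equiv.Perm (Fin n)) (h : G → Fin n → H)
    (hcompat : ∀ (g : G) (i : Fin n), g • u i = op (h g i) • u (π g i)) :
    ∃ e : (⨂[R] _ : Fin n, (X →₀ R)) ≃ₗ[R] ((Fin n → X) →₀ R),
      ∀ (g : G) (v : ⨂[R] _ : Fin n, (X →₀ R)),
        e (tInd π h (fun b => Finsupp.domLCongr (MulAction.toPerm b)) g v) =
          Finsupp.mapDomain (sAct π h (fun b p => b • p) g) (e v) :=
  stmt14_general π h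
end

section
/- If z is a unit in the ring of integers ℤ[μ] of a cyclotomic field ℚ(μ) such that z·σ₋₁(z) = 1, where σ₋₁ is the automorphism sending μ to μ⁻¹ (complex conjugation), then z is a root of unity; in particular z = ±μ^f for some integer f when μ has odd or prime-power order appropriately, and the group of such orthogonal units is exactly the torsion subgroup of ℤ[μ]^×. -/
/-!
Let `φ : ℚ(μ) → ℂ` be any complex embedding. Both `starRingEnd ℂ ∘ φ` and `φ ∘ σ₋₁` send `μ` to
`φ(μ)⁻¹ = conj φ(μ)`, so they agree. Hence `φ (z · σ₋₁ z) = |φ z|²`, and `z · σ₋₁ z = 1` says that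
every conjugate of `z` has absolute value `1`; by Kronecker's theorem this characterises the
roots of unity among algebraic integers. Finally, the roots of unity of `ℚ(μ)` are the `±μ^f`,
since the torsion subgroup of the units has order `h` for even `h` and `2h` for odd `h`.
-/

open NumberField

theorem IsPrimitiveRoot.starRingEnd_apply_eq_apply_of_map_eq_inv {n : ℕ} [NeZero n]
    {K : Type*} [Field K] [CharZero K] [IsCyclotomicExtension {n} ℚ K] {μ : K}
    (hμ : IsPrimitiveRoot μ n) {σ : K ≃ₐ[ℚ] K} (hσ : σ μ = μ⁻¹) (φ : K →+* ℂ) (x : K) :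
    starRingEnd ℂ (φ x) = φ (σ x) := by
  have hconj_μ : starRingEnd ℂ (φ μ) = φ (σ μ) := by
    have hnorm : ‖φ μ‖ = 1 :=
      Complex.norm_eq_one_of_pow_eq_one (by rw [← map_pow, hμ.pow_eq_one, map_one]) (NeZero.ne n)
    rw [hσ, map_inv₀, Complex.inv_eq_conj hnorm]
  have hext : ((starRingEnd ℂ).comp φ).toRatAlgHom = (φ.comp (σ : K →+* K)).toRatAlgHom :=
    (hμ.powerBasis ℚ).algHom_ext (by rw [hμ.powerBasis_gen ℚ]; exact hconj_μ)
  simpa using DFunLike.congr_fun hext x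

theorem IsPrimitiveRoot.mul_map_eq_one_iff_forall_norm_eq_one {n : ℕ} [NeZero n]
    {K : Type*} [Field K] [NumberField K] [IsCyclotomicExtension {n} ℚ K] {μ : K}
    (hμ : IsPrimitiveRoot μ n) {σ : K ≃ₐ[ℚ] K} (hσ : σ μ = μ⁻¹) (x : K) :
    x * σ x = 1 ↔ ∀ φ : K →+* ℂ, ‖φ x‖ = 1 := by
  have hsq (φ : K →+* ℂ) : φ (x * σ x) = ((‖φ x‖ ^ 2 : ℝ) : ℂ) := by
    rw [map_mul, ← hμ.starRingEnd_apply_eq_apply_of_map_eq_inv hσ, Complex.mul_conj',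
      Complex.ofReal_pow]
  constructor
  · intro h φ
    have hsq_one : ‖φ x‖ ^ 2 = 1 := by exact_mod_cast (h ▸ hsq φ).symm.trans (map_one φ)
    exact (pow_eq_one_iff_of_nonneg (norm_nonneg _) two_ne_zero).1 hsq_one
  · intro h
    obtain ⟨φ⟩ : Nonempty (K →+* ℂ) := inferInstance
    apply φ.injective
    rw [hsq, h φ, map_one]
    norm_num

theorem IsPrimitiveRoot.mul_map_eq_one_iff_isOfFinOrder {n : ℕ} [NeZero n]
    {K : Type*} [Field K] [NumberField K] [IsCyclotomicExtension {n} ℚ K] {μ : K}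
    (hμ : IsPrimitiveRoot μ n) {σ : K ≃ₐ[ℚ] K} (hσ : σ μ = μ⁻¹) (z : (𝓞 K)ˣ) :
    (z : K) * σ z = 1 ↔ IsOfFinOrder z := by
  rw [hμ.mul_map_eq_one_iff_forall_norm_eq_one hσ, ← InfinitePlace.eq_iff_eq, ← Units.mem_torsion]
  rfl

theorem IsPrimitiveRoot.exists_eq_pow_or_eq_neg_pow_of_isOfFinOrder {n : ℕ} [NeZero n]
    {K : Type*} [Field K] [NumberField K] [IsCyclotomicExtension {n} ℚ K] {μ : K}
    (hμ : IsPrimitiveRoot μ n) {z : (𝓞 K)ˣ} (hz : IsOfFinOrder z) :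
    ∃ f : ℕ, (z : K) = μ ^ f ∨ (z : K) = -μ ^ f := by
  rcases Nat.even_or_odd n with hn | hn
  · have hpow : z ^ n = 1 := by
      have : z ∈ rootsOfUnity (Units.torsionOrder K) (𝓞 K) := by
        rw [Units.rootsOfUnity_eq_torsion]
        exact hz
      rwa [mem_rootsOfUnity, IsCyclotomicExtension.Rat.torsionOrder_eq (n := n), if_pos hn] at this
    obtain ⟨f, -, hf⟩ := hμ.eq_pow_of_pow_eq_one (ξ := (z : K))
      (by rw [← Units.coe_pow, hpow, Units.coe_one])
    exact ⟨f, .inl hf.symm⟩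
  · obtain ⟨f, -, hf⟩ := hμ.exists_pow_or_neg_mul_pow_of_isOfFinOrder hn
      (((algebraMap (𝓞 K) K).toMonoidHom.comp (Units.coeHom (𝓞 K))).isOfFinOrder hz)
    exact ⟨f, hf⟩

/-- If `z` is a unit of the ring of integers `ℤ[μ]` of the cyclotomic field `ℚ(μ)` with
`z·σ₋₁(z) = 1`, where `σ₋₁` is the automorphism sending `μ ↦ μ⁻¹` (complex conjugation),
then `z` is a root of unity — indeed `z = ±μ^f` for some `f` — and the group of such
orthogonal units is exactly the torsion subgroup of `ℤ[μ]ˣ`. -/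
theorem stmt17 (h : ℕ+) (μ : CyclotomicField h ℚ) (hμ : IsPrimitiveRoot μ (h : ℕ))
    (σ : CyclotomicField h ℚ ≃ₐ[ℚ] CyclotomicField h ℚ) (hσ : σ μ = μ⁻¹)
    (z : (𝓞 (CyclotomicField h ℚ))ˣ) :
    (algebraMap (𝓞 (CyclotomicField h ℚ)) (CyclotomicField h ℚ) ↑z *
        σ (algebraMap (𝓞 (CyclotomicField h ℚ)) (CyclotomicField h ℚ) ↑z) = 1 →
      (∃ m : ℕ, 0 < m ∧ z ^ m = 1) ∧
      ∃ f : ℕ, algebraMap (𝓞 (CyclotomicField h ℚ)) (CyclotomicField h ℚ) ↑z = μ ^ f ∨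
        algebraMap (𝓞 (CyclotomicField h ℚ)) (CyclotomicField h ℚ) ↑z = -μ ^ f) ∧
    (algebraMap (𝓞 (CyclotomicField h ℚ)) (CyclotomicField h ℚ) ↑z *
        σ (algebraMap (𝓞 (CyclotomicField h ℚ)) (CyclotomicField h ℚ) ↑z) = 1 ↔
      IsOfFinOrder z) := by
  -- The library instance is stated for `CyclotomicField.algebra`, which agrees with the
  -- characteristic-zero `ℚ`-algebra structure used by the lemmas above only up to unfolding.
  have : IsCyclotomicExtension {(h : ℕ)} ℚ (CyclotomicField h ℚ) :=
    CyclotomicField.isCyclotomicExtension (h : ℕ) ℚ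
  have horthogonal_iff := hμ.mul_map_eq_one_iff_isOfFinOrder hσ z
  refine ⟨fun hz => ?_, horthogonal_iff⟩
  have hfin := horthogonal_iff.1 hz
  exact ⟨isOfFinOrder_iff_pow_eq_one.1 hfin, hμ.exists_eq_pow_or_eq_neg_pow_of_isOfFinOrder hfin⟩
end

section
/- Let τ_G : T_F(G) → T̃_F(G) be the injective ghost map with finite cokernel, preserving multiplication and duality. Then the group U_∘(T_F(G)) of orthogonal units (units a with a⁻¹ = a°) equals the torsion subgroup of T_F(G)^×. -/
/-!
The ghost map restricts to an injective group homomorphism `T_F(G)ˣ → T̃_F(G)ˣ` that commutes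
with the dualities. An injective homomorphism preserves and reflects both finite order and
orthogonality, so the description of orthogonal units in the ghost ring pulls back.
-/

def Units.IsOrthogonal {M : Type*} [Monoid M] (dual : M → M) (u : Mˣ) : Prop :=
  ((u⁻¹ : Mˣ) : M) = dual u

theorem Units.isOrthogonal_map_iff {M N : Type*} [Monoid M] [Monoid N]
    {dualM : M → M} {dualN : N → N} {f : M →* N} (hf : Function.Injective f)
    (hdual : ∀ a, f (dualM a) = dualN (f a)) (u : Mˣ) :
    (Units.map f u).IsOrthogonal dualN ↔ u.IsOrthogonal dualM := by
  rw [Units.IsOrthogonal, Units.IsOrthogonal, ← map_inv, Units.coe_map, Units.coe_map, ← hdual]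
  exact hf.eq_iff

theorem stmt18_general {T Tt : Type*} [CommRing T] [CommRing Tt]
    (dualT : T ≃+* T) (dualTt : Tt ≃+* Tt)
    (τ : T →+* Tt) (hinj : Function.Injective τ)
    (hcomm : ∀ a, τ (dualT a) = dualTt (τ a))
    (hghost : ∀ b : Ttˣ, ((b⁻¹ : Ttˣ) : Tt) = dualTt b ↔ IsOfFinOrder b) :
    ∀ a : Tˣ, ((a⁻¹ : Tˣ) : T) = dualT a ↔ IsOfFinOrder a := by
  intro a
  calc a.IsOrthogonal dualT
      ↔ (Units.map (τ : T →* Tt) a).IsOrthogonal dualTt :=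
        (Units.isOrthogonal_map_iff (f := (τ : T →* Tt)) hinj hcomm a).symm
    _ ↔ IsOfFinOrder (Units.map (τ : T →* Tt) a) := hghost _
    _ ↔ IsOfFinOrder a := (Units.map_injective (f := (τ : T →* Tt)) hinj).isOfFinOrder_iff

/-- Let `τ_G : T_F(G) → T̃_F(G)` be the injective ghost map of the trivial source ring,
with finite cokernel, commuting with the duality operators `-°`; in the ghost ring the
orthogonal units are exactly the torsion units.  Then the group of orthogonal units
`U∘(T_F(G)) = {a ∈ T_F(G)ˣ : a⁻¹ = a°}` equals the torsion subgroup of `T_F(G)ˣ`. -/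
theorem stmt18 {T Tt : Type*} [CommRing T] [CommRing Tt]
    (dualT : T ≃+* T) (dualTt : Tt ≃+* Tt)
    (hdT : ∀ a, dualT (dualT a) = a) (hdTt : ∀ b, dualTt (dualTt b) = b)
    (τ : T →+* Tt) (hinj : Function.Injective τ)
    (hcok : ∃ m : ℕ, 0 < m ∧ ∀ b : Tt, ∃ a : T, m • b = τ a)
    (hcomm : ∀ a, τ (dualT a) = dualTt (τ a))
    (hghost : ∀ b : Ttˣ, ((b⁻¹ : Ttˣ) : Tt) = dualTt b ↔ IsOfFinOrder b) :
    ∀ a : Tˣ, ((a⁻¹ : Tˣ) : T) = dualT a ↔ IsOfFinOrder a :=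
  stmt18_general dualT dualTt τ hinj hcomm hghost
end

section
/- The orthogonal unit group of the Brauer character ring R_F(G) is U_∘(R_F(G)) = { ±χ|_{E_p(G)} : χ ∈ Ĝ }, i.e., signs times restrictions of linear characters of G to the p-regular elements; consequently it is a finite group. -/
/-!
A dual-preserving ring morphism sends orthogonal units (units `v` with `v⁻¹ = v°`) to orthogonal
units. Applied to the decomposition map `d` this gives `d '' U∘(R_K(G)) ⊆ U∘(R_F(G))`; applied to
its section `m` it shows every orthogonal unit `b` of `R_F(G)` is `d (m b)` with `m b` orthogonal,
so `U∘(R_F(G))` is the image of Yamauchi's finite group `U∘(R_K(G))`.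
-/

/-- `U∘(R)` for a ring `R` with duality `σ`. -/
def orthogonalUnits {R : Type*} [Monoid R] (σ : R → R) : Set R :=
  {a | ∃ v : Rˣ, (v : R) = a ∧ ((v⁻¹ : Rˣ) : R) = σ a}

section

variable {R S F : Type*} [Monoid R] [Monoid S] [FunLike F R S] [MonoidHomClass F R S]
  {σ : R → R} {τ : S → S}

theorem map_mem_orthogonalUnits {f : F} (hf : ∀ a, f (σ a) = τ (f a)) {a : R}
    (ha : a ∈ orthogonalUnits σ) : f a ∈ orthogonalUnits τ := by
  obtain ⟨v, rfl, hv⟩ := ha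
  refine ⟨Units.map (f : R →* S) v, rfl, ?_⟩
  rw [← map_inv, Units.coe_map, MonoidHom.coe_coe, hv, hf]

theorem image_orthogonalUnits_of_rightInverse {G : Type*} [FunLike G S R] [MonoidHomClass G S R]
    {f : F} {g : G} (hf : ∀ a, f (σ a) = τ (f a)) (hg : ∀ b, g (τ b) = σ (g b))
    (hfg : ∀ b, f (g b) = b) : f '' orthogonalUnits σ = orthogonalUnits τ := by
  refine Set.Subset.antisymm ?_ fun b hb => ⟨g b, map_mem_orthogonalUnits hg hb, hfg b⟩
  rintro _ ⟨a, ha, rfl⟩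
  exact map_mem_orthogonalUnits hf ha

end

/-- `d` is the decomposition map `R_K(G) → R_F(G)`, `m` its section `m(ψ)(x) = ψ(x_{p'})`, and
`L = {±χ : χ ∈ Ĝ}` is `U∘(R_K(G))` by Yamauchi's theorem. -/
theorem stmt19_general {RK RF : Type*} [CommRing RK] [CommRing RF]
    (dualK : RK ≃+* RK) (dualF : RF ≃+* RF)
    (d : RK →+* RF) (m : RF →+* RK)
    (hd : ∀ a, d (dualK a) = dualF (d a)) (hm : ∀ b, m (dualF b) = dualK (m b))
    (hsec : ∀ b, d (m b) = b)
    (L : Set RK) (hLfin : L.Finite)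
    (hYamauchi : {a : RK | ∃ v : RKˣ, (v : RK) = a ∧ ((v⁻¹ : RKˣ) : RK) = dualK a} = L) :
    {b : RF | ∃ w : RFˣ, (w : RF) = b ∧ ((w⁻¹ : RFˣ) : RF) = dualF b} = d '' L ∧
    {b : RF | ∃ w : RFˣ, (w : RF) = b ∧ ((w⁻¹ : RFˣ) : RF) = dualF b}.Finite := by
  have himage : orthogonalUnits dualF = d '' L :=
    hYamauchi ▸ (image_orthogonalUnits_of_rightInverse hd hm hsec).symm
  change orthogonalUnits dualF = d '' L ∧ (orthogonalUnits dualF).Finite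
  exact ⟨himage, himage ▸ hLfin.image d⟩

/-- The orthogonal unit group of the Brauer character ring:
`U∘(R_F(G)) = {±χ|_{E_p(G)} : χ ∈ Ĝ}`, and in particular it is finite.  Here
`d : R_K(G) → R_F(G)` is the (surjective) decomposition map (restriction to `p`-regular
elements), `m` is its dual-preserving ring-morphism section `m(ψ)(x) = ψ(x_{p'})`, and
`L = {±χ : χ ∈ Ĝ}` is the orthogonal unit group of the character ring given by
Yamauchi's theorem. -/
theorem stmt19 {RK RF : Type*} [CommRing RK] [CommRing RF]
    (dualK : RK ≃+* RK) (dualF : RF ≃+* RF)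
    (hdK : ∀ a, dualK (dualK a) = a) (hdF : ∀ b, dualF (dualF b) = b)
    (d : RK →+* RF) (m : RF →+* RK)
    (hd : ∀ a, d (dualK a) = dualF (d a)) (hm : ∀ b, m (dualF b) = dualK (m b))
    (hsec : ∀ b, d (m b) = b)
    (L : Set RK) (hLfin : L.Finite)
    (hYamauchi : {a : RK | ∃ v : RKˣ, (v : RK) = a ∧ ((v⁻¹ : RKˣ) : RK) = dualK a} = L) :
    {b : RF | ∃ w : RFˣ, (w : RF) = b ∧ ((w⁻¹ : RFˣ) : RF) = dualF b} = d '' L ∧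
    {b : RF | ∃ w : RFˣ, (w : RF) = b ∧ ((w⁻¹ : RFˣ) : RF) = dualF b}.Finite :=
  stmt19_general dualK dualF d m hd hm hsec L hLfin hYamauchi
end
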